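/- Let A_3 be the 3-dimensional associative algebra with e1 · e1 = e2, e1 · e2 = e3, e2 · e1 = e3 (other basis products zero). Then r = a(e2 ⊗ e3 − e3 ⊗ e2) is an antisymmetric solution of the associative Yang–Baxter equation in A_3 for every scalar a. -/
import Mathlib


open Finset

/-- Structure constants of the algebra `A₃`: `e₁·e₁ = e₂`, `e₁·e₂ = e₃`,
`e₂·e₁ = e₃`, other basis products zero. -/
def cA3 (i j k : Fin 3) : ℂ :=
  if i = 0 ∧ j = 0 ∧ k = 1 then 1
  else if i = 0 ∧ j = 1 ∧ k = 2 then 1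
  else if i = 1 ∧ j = 0 ∧ k = 2 then 1
  else 0

/-- The associative Yang–Baxter equation in components. -/
def AYBE3 (c : Fin 3 → Fin 3 → Fin 3 → ℂ) (r : Fin 3 → Fin 3 → ℂ) : Prop :=
  ∀ u v w : Fin 3,
    (∑ i, ∑ j, r i v * r j w * c i j u)
      + (∑ i, ∑ j, r u i * r v j * c i j w)
      - (∑ i, ∑ j, r i w * r u j * c i j v) = 0

/-- `r = a(e₂⊗e₃ − e₃⊗e₂)` as a coefficient matrix. -/
def rA3 (a : ℂ) : Fin 3 → Fin 3 → ℂ :=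
  fun i j => if i = 1 ∧ j = 2 then a else if i = 2 ∧ j = 1 then -a else 0

/-- In `A₃`, `r = a(e₂⊗e₃ − e₃⊗e₂)` is an antisymmetric solution of the
associative Yang–Baxter equation for every scalar `a`. -/
theorem rA3_antisymmetric_AYBE_solution (a : ℂ) :
    (∀ i j : Fin 3, rA3 a i j = - rA3 a j i) ∧ AYBE3 cA3 (rA3 a) := by
  constructor
  · intro i j
    fin_cases i <;> fin_cases j <;> simp [rA3]
  · intro u v w
    fin_cases u <;> fin_cases v <;> fin_cases w <;>
      simp [Fin.sum_univ_three, rA3, cA3]
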